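/- arXiv:2007.05246 — 3 statements merged into one kernel-verified Lean document; each statement's English description precedes it below -/
import Mathlib

section
/- For every graph G, generalized threshold function τ, subset V_f ⊆ V(G), and positive integer k: there exists a target set S₀ ⊇ V_f with activation time t_τ(S₀) ≥ k if and only if there exists a target set S₀' ⊇ V_f with activation time t_τ(S₀') exactly equal to k. -/
/-! Starting the process from the `(t - k)`-th iterate of a target set with activation time
`t ≥ k` skips its first `t - k` rounds: the result is again a target set containing the
original one, and it stabilises exactly `k` rounds later. -/

namespace TSS

variable {V : Type*}

/-- The interval (one activation step): `S` together with all vertices having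
at least `τ v` neighbors in `S`. -/
def interval (G : SimpleGraph V) (τ : V → ℕ) (S : Set V) : Set V :=
  S ∪ {v | τ v ≤ (G.neighborSet v ∩ S).ncard}

/-- `S` is a target set if iterating the interval operator reaches all of `V`. -/
def IsTargetSet (G : SimpleGraph V) (τ : V → ℕ) (S : Set V) : Prop :=
  ∃ t : ℕ, (interval G τ)^[t] S = Set.univ

/-- The activation time of a set: least `t` with `I^[t+1] S = I^[t] S`. -/
noncomputable def actTime (G : SimpleGraph V) (τ : V → ℕ) (S : Set V) : ℕ :=
  sInf {t : ℕ | (interval G τ)^[t + 1] S = (interval G τ)^[t] S}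

/-- The maximum activation time over all target sets. -/
noncomputable def maxTime (G : SimpleGraph V) (τ : V → ℕ) : ℕ :=
  sSup {t : ℕ | ∃ S : Set V, IsTargetSet G τ S ∧ actTime G τ S = t}

/-- The activation time of a vertex `v` for an initial set `S`. -/
noncomputable def vTime (G : SimpleGraph V) (τ : V → ℕ) (S : Set V) (v : V) : ℕ :=
  sInf {k : ℕ | v ∈ (interval G τ)^[k] S}

/-- The set of vertices eventually activated from `S`. -/
def hull (G : SimpleGraph V) (τ : V → ℕ) (S : Set V) : Set V :=
  {v | ∃ k : ℕ, v ∈ (interval G τ)^[k] S}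

end TSS

open TSS

namespace TSS

variable {V : Type*} (G : SimpleGraph V) (τ : V → ℕ)

lemma subset_interval (S : Set V) : S ⊆ interval G τ S := Set.subset_union_left

lemma monotone_iterate_interval : Monotone fun n => (interval G τ)^[n] :=
  Function.monotone_iterate_of_id_le (subset_interval G τ)

lemma subset_iterate_interval (S : Set V) (n : ℕ) : S ⊆ (interval G τ)^[n] S :=
  monotone_iterate_interval G τ (Nat.zero_le n) S

variable {G τ}

lemma IsTargetSet.iterate {S : Set V} (hS : IsTargetSet G τ S) (n : ℕ) :
    IsTargetSet G τ ((interval G τ)^[n] S) := by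
  obtain ⟨m, hm⟩ := hS
  refine ⟨m, Set.eq_univ_of_univ_subset ?_⟩
  rw [← hm, ← Function.iterate_add_apply]
  exact monotone_iterate_interval G τ (Nat.le_add_right m n) S

lemma actTime_iterate {S : Set V} {n : ℕ} (hn : n ≤ actTime G τ S) :
    actTime G τ ((interval G τ)^[n] S) = actTime G τ S - n := by
  -- the stabilisation times of `I^[n] S` are those of `S`, shifted down by `n`
  have hshift :=
    Nat.sInf_add (p := fun t => (interval G τ)^[t + 1] S = (interval G τ)^[t] S) hn
  simp only [add_right_comm _ n 1] at hshift
  simp only [actTime, ← Function.iterate_add_apply]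
  omega

end TSS

theorem stmt1_general {V : Type*} (G : SimpleGraph V) (τ : V → ℕ)
    (Vf : Set V) (k : ℕ) :
    (∃ S₀ : Set V, Vf ⊆ S₀ ∧ TSS.IsTargetSet G τ S₀ ∧ k ≤ TSS.actTime G τ S₀) ↔
    (∃ S₀ : Set V, Vf ⊆ S₀ ∧ TSS.IsTargetSet G τ S₀ ∧ TSS.actTime G τ S₀ = k) := by
  constructor
  · rintro ⟨S, hVf, hS, hk⟩
    refine ⟨(interval G τ)^[actTime G τ S - k] S,
      hVf.trans (subset_iterate_interval G τ S _), hS.iterate _, ?_⟩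
    rw [actTime_iterate (Nat.sub_le _ k)]
    omega
  · rintro ⟨S, hVf, hS, rfl⟩
    exact ⟨S, hVf, hS, le_rfl⟩

/-- there is a target set containing V_f with activation time ≥ k iff
there is one with activation time exactly k. -/
theorem stmt1 {V : Type*} [Fintype V] (G : SimpleGraph V) (τ : V → ℕ)
    (Vf : Set V) (k : ℕ) (hk : 0 < k) :
    (∃ S₀ : Set V, Vf ⊆ S₀ ∧ TSS.IsTargetSet G τ S₀ ∧ k ≤ TSS.actTime G τ S₀) ↔
    (∃ S₀ : Set V, Vf ⊆ S₀ ∧ TSS.IsTargetSet G τ S₀ ∧ TSS.actTime G τ S₀ = k) :=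
  stmt1_general G τ Vf k
end

section
/- Let T be a tree with at least two vertices and τ a threshold function on T. For any path P = (v₀, v₁, …, v_p) in T with p ≥ 1 such that v₀ is a leaf and every internal vertex v_i (0 < i < p) satisfies τ(v_i) < deg(v_i), there exists a target set S_P of T containing v₀ such that for every i ∈ {1, …, p}, vertex v_i is activated at time exactly i (i.e., v_i ∈ I_τ^i(S_P) \ I_τ^{i−1}(S_P)). -/
open TSS

namespace SimpleGraph

variable {V : Type*} {G : SimpleGraph V}

def childSet (G : SimpleGraph V) (r v : V) : Set V :=
  {c | G.Adj v c ∧ G.dist r c = G.dist r v + 1}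

lemma IsTree.exists_adj_dist_add_one_eq (hT : G.IsTree) (r : V) {v : V} (hv : v ≠ r) :
    ∃ u, G.Adj v u ∧ G.dist r u + 1 = G.dist r v := by
  obtain ⟨p, -, hp⟩ := hT.connected.exists_path_of_dist v r
  cases p with
  | nil => exact absurd rfl hv
  | cons h q =>
    refine ⟨_, h, ?_⟩
    have hq := dist_le q
    rw [Walk.length_cons] at hp
    rw [dist_comm] at hq hp
    rcases hT.dist_eq_dist_add_one_of_adj r h with h' | h' <;> omega

lemma IsTree.eq_of_adj_of_dist_add_one_eq (hT : G.IsTree) (r : V) {v u₁ u₂ : V}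
    (h₁ : G.Adj v u₁) (hd₁ : G.dist r u₁ + 1 = G.dist r v)
    (h₂ : G.Adj v u₂) (hd₂ : G.dist r u₂ + 1 = G.dist r v) : u₁ = u₂ := by
  classical
  obtain ⟨p, hp, -⟩ := hT.connected.exists_path_of_dist r v
  have eq_penultimate : ∀ u, G.Adj v u → G.dist r u + 1 = G.dist r v → u = p.penultimate := by
    intro u hu hdu
    obtain ⟨q, hq, hql⟩ := hT.connected.exists_path_of_dist r u
    have hvq : v ∉ q.support := fun hv => by
      have := (dist_le (q.takeUntil v hv)).trans (q.length_takeUntil_le_length hv)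
      omega
    exact hT.isAcyclic.eq_penultimate_of_adj_end hp hu
      (hT.isAcyclic.mem_support_of_ne_mem_support_of_adj_of_isPath hp hq hu hvq)
  rw [eq_penultimate u₁ h₁ hd₁, eq_penultimate u₂ h₂ hd₂]

lemma IsTree.ncard_neighborSet_le_ncard_childSet_add_one [Finite V] (hT : G.IsTree) (r v : V) :
    (G.neighborSet v).ncard ≤ (G.childSet r v).ncard + 1 := by
  have hparent : (G.neighborSet v \ G.childSet r v).Subsingleton := by
    rintro u₁ ⟨h₁, hc₁⟩ u₂ ⟨h₂, hc₂⟩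
    have hd₁ := hT.dist_eq_dist_add_one_of_adj r h₁
    have hd₂ := hT.dist_eq_dist_add_one_of_adj r h₂
    exact hT.eq_of_adj_of_dist_add_one_eq r h₁ (by grind [childSet, mem_neighborSet]) h₂
      (by grind [childSet, mem_neighborSet])
  have := Set.ncard_le_ncard_sdiff_add_ncard (G.neighborSet v) (G.childSet r v)
  have := (Set.ncard_le_one_iff_subsingleton (s := G.neighborSet v \ G.childSet r v)).2 hparent
  omega

lemma IsTree.exists_subset_childSet_sdiff [Finite V] (hT : G.IsTree) (r : V) {u : V} {A : Set V}
    (hA : A ⊆ G.childSet r u) {k : ℕ} (hk : k + A.ncard + 1 ≤ (G.neighborSet u).ncard) :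
    ∃ E ⊆ G.childSet r u \ A, E.ncard = k := by
  apply Set.exists_subset_card_eq
  rw [Set.ncard_sdiff hA]
  have := hT.ncard_neighborSet_le_ncard_childSet_add_one r u
  have := Set.ncard_le_ncard hA
  omega

lemma IsTree.dist_eq_of_adj_of_injOn (hT : G.IsTree) {p : ℕ} {vs : ℕ → V}
    (hinj : ∀ i ≤ p, ∀ j ≤ p, vs i = vs j → i = j)
    (hadj : ∀ i < p, G.Adj (vs i) (vs (i + 1))) :
    ∀ i ≤ p, G.dist (vs 0) (vs i) = i := by
  intro i
  induction i using Nat.strong_induction_on with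
  | _ i ih =>
    intro hi
    match i with
    | 0 => exact dist_self
    | 1 => exact dist_eq_one_iff_adj.2 (hadj 0 (by omega))
    | n + 2 =>
      show G.dist (vs 0) (vs (n + 1 + 1)) = n + 1 + 1
      have h₀ := ih n (by omega) (by omega)
      have h₁ := ih (n + 1) (by omega) (by omega)
      rcases hT.dist_eq_dist_add_one_of_adj (vs 0) (hadj (n + 1) (by omega)) with h | h
      · -- then `vs n` and `vs (n + 2)` are both the parent of `vs (n + 1)`
        have := hT.eq_of_adj_of_dist_add_one_eq (vs 0) (hadj (n + 1) (by omega)) (by omega)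
          (hadj n (by omega)).symm (by omega)
        have := hinj _ hi n (by omega) this
        omega
      · omega

end SimpleGraph

namespace TSS

open SimpleGraph

variable {V : Type*}

def IsSchedule (G : SimpleGraph V) (τ : V → ℕ) (f : V → ℕ) : Prop :=
  ∀ v k, k < f v → (τ v ≤ (G.neighborSet v ∩ {u | f u ≤ k}).ncard ↔ f v = k + 1)

lemma IsSchedule.iterate_interval_eq {G : SimpleGraph V} {τ f : V → ℕ} (hf : IsSchedule G τ f)
    (t : ℕ) : (interval G τ)^[t] {v | f v = 0} = {v | f v ≤ t} := by
  induction t with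
  | zero => simp
  | succ t ih =>
    rw [Function.iterate_succ_apply', ih]
    ext v
    simp only [interval, Set.mem_union, Set.mem_ofPred_eq]
    rcases le_or_gt (f v) t with h | h
    · simp only [h, true_or, true_iff]
      omega
    · rw [hf v t h]
      omega

def lateSet (G : SimpleGraph V) (r : V) (early : V → Set V) (s : V) : Set V :=
  {v | Relation.ReflTransGen (fun u c => c ∈ G.childSet r u \ early u) s v}

noncomputable def lateSchedule (G : SimpleGraph V) (r : V) (early : V → Set V) (s : V) : V → ℕ :=
  (lateSet G r early s).indicator (G.dist r)

section LateSet

variable {G : SimpleGraph V} {r s : V} {early : V → Set V}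

lemma lateSchedule_eq_dist {v : V} (hv : v ∈ lateSet G r early s) :
    lateSchedule G r early s v = G.dist r v :=
  Set.indicator_of_mem hv _

lemma lateSchedule_le_dist (v : V) : lateSchedule G r early s v ≤ G.dist r v := by
  by_cases hv : v ∈ lateSet G r early s <;> simp [lateSchedule, hv]

lemma one_le_dist_of_mem_lateSet (hs : G.Adj r s) {v : V} (hv : v ∈ lateSet G r early s) :
    1 ≤ G.dist r v := by
  induction hv with
  | refl => exact (dist_eq_one_iff_adj.2 hs).ge
  | tail _ hc _ => rw [hc.1.2]; omega

lemma parent_mem_lateSet (hT : G.IsTree) {u v : V} (hv : v ∈ lateSet G r early s) (hvs : v ≠ s)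
    (hu : G.Adj v u) (hd : G.dist r u + 1 = G.dist r v) :
    u ∈ lateSet G r early s ∧ v ∉ early u := by
  obtain ⟨w, hw, hwv⟩ := ((Relation.ReflTransGen.cases_tail_iff _ _ _).1 hv).resolve_left hvs
  obtain rfl : u = w := hT.eq_of_adj_of_dist_add_one_eq r hu hd hwv.1.1.symm hwv.1.2.symm
  exact ⟨hw, hwv.2⟩

lemma notMem_lateSet_of_mem_early (hT : G.IsTree) (hs : G.Adj r s)
    (hearly : ∀ u, early u ⊆ G.childSet r u) {u c : V} (hu : u ∈ lateSet G r early s)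
    (hc : c ∈ early u) : c ∉ lateSet G r early s := by
  intro hcL
  have hcu := hearly u hc
  have hcs : c ≠ s := by
    rintro rfl
    have := one_le_dist_of_mem_lateSet hs hu
    have := hcu.2
    rw [dist_eq_one_iff_adj.2 hs] at this
    omega
  exact (parent_mem_lateSet hT hcL hcs hcu.1.symm hcu.2.symm).2 hc

lemma neighborSet_inter_subset_early (hT : G.IsTree) (hs : G.Adj r s) {v : V} {k : ℕ}
    (hv : v ∈ lateSet G r early s) (hk : k + 2 ≤ G.dist r v) :
    G.neighborSet v ∩ {u | lateSchedule G r early s u ≤ k} ⊆ early v := by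
  rintro x ⟨hx, hxk⟩
  rw [Set.mem_ofPred_eq] at hxk
  rcases hT.dist_eq_dist_add_one_of_adj r hx with hd | hd
  · have hvs : v ≠ s := by
      rintro rfl
      rw [dist_eq_one_iff_adj.2 hs] at hk
      omega
    have := lateSchedule_eq_dist (parent_mem_lateSet hT hv hvs hx hd.symm).1
    omega
  · by_contra hxe
    have := lateSchedule_eq_dist (hv.tail ⟨⟨hx, hd⟩, hxe⟩)
    omega

lemma insert_early_subset_neighborSet_inter (hT : G.IsTree) (hs : G.Adj r s)
    (hearly : ∀ u, early u ⊆ G.childSet r u) {u v : V} {k : ℕ} (hv : v ∈ lateSet G r early s)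
    (hu : G.Adj v u) (hdu : G.dist r u = k) :
    insert u (early v) ⊆ G.neighborSet v ∩ {w | lateSchedule G r early s w ≤ k} := by
  refine Set.insert_subset ⟨hu, hdu ▸ lateSchedule_le_dist u⟩ fun c hc => ⟨(hearly v hc).1, ?_⟩
  rw [Set.mem_ofPred_eq, lateSchedule, Set.indicator_of_notMem
    (notMem_lateSet_of_mem_early hT hs hearly hv hc)]
  exact k.zero_le

theorem isSchedule_lateSchedule [Finite V] {τ : V → ℕ} (hT : G.IsTree) (hs : G.Adj r s)
    (hearly : ∀ u, early u ⊆ G.childSet r u) (hτ : ∀ u, (early u).ncard + 1 = τ u) :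
    IsSchedule G τ (lateSchedule G r early s) := by
  intro v k hk
  have hvL : v ∈ lateSet G r early s := by
    by_contra h
    simp [lateSchedule, h] at hk
  rw [lateSchedule_eq_dist hvL] at hk ⊢
  constructor
  · intro hτv
    by_contra hne
    have := Set.ncard_le_ncard (neighborSet_inter_subset_early hT hs hvL (k := k) (by omega))
    have := hτ v
    omega
  · intro hd
    have hvr : v ≠ r := by
      rintro rfl
      simp at hd
    obtain ⟨u, hu, hdu⟩ := hT.exists_adj_dist_add_one_eq r hvr
    have hu_early : u ∉ early v := fun h => by
      have := (hearly v h).2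
      omega
    calc τ v = (insert u (early v)).ncard := by rw [Set.ncard_insert_of_notMem hu_early, hτ]
      _ ≤ _ := Set.ncard_le_ncard
          (insert_early_subset_neighborSet_inter hT hs hearly hvL hu (by omega))

end LateSet

section Path

variable {G : SimpleGraph V} {p : ℕ} {vs : ℕ → V}

lemma exists_early_avoiding_path [Finite V] (hT : G.IsTree) (r : V) {τ : V → ℕ}
    (hτ : ∀ x : V, 1 ≤ τ x ∧ τ x ≤ (G.neighborSet x).ncard)
    (hinj : ∀ i ≤ p, ∀ j ≤ p, vs i = vs j → i = j)
    (hchild : ∀ i < p, vs (i + 1) ∈ G.childSet r (vs i))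
    (hns : ∀ i : ℕ, 0 < i → i < p → τ (vs i) < (G.neighborSet (vs i)).ncard) :
    ∃ early : V → Set V, (∀ u, early u ⊆ G.childSet r u) ∧ (∀ u, (early u).ncard + 1 = τ u) ∧
      ∀ i, 0 < i → i < p → vs (i + 1) ∉ early (vs i) := by
  have : ∀ u, ∃ E ⊆ G.childSet r u, E.ncard + 1 = τ u ∧
      ∀ i, 0 < i → i < p → u = vs i → vs (i + 1) ∉ E := by
    intro u
    by_cases hu : ∃ i, 0 < i ∧ i < p ∧ u = vs i
    · obtain ⟨i, hi, hip, rfl⟩ := hu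
      obtain ⟨E, hE, hcard⟩ := hT.exists_subset_childSet_sdiff r
        (Set.singleton_subset_iff.2 (hchild i hip)) (k := τ (vs i) - 1) (by
          have := hns i hi hip
          have := (hτ (vs i)).1
          rw [Set.ncard_singleton]
          omega)
      refine ⟨E, hE.trans Set.sdiff_subset, by have := (hτ (vs i)).1; omega, fun j _ hjp hji => ?_⟩
      obtain rfl := hinj j hjp.le i hip.le hji.symm
      exact fun h => (hE h).2 rfl
    · obtain ⟨E, hE, hcard⟩ := hT.exists_subset_childSet_sdiff r (Set.empty_subset (G.childSet r u))
        (k := τ u - 1) (by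
          have := hτ u
          rw [Set.ncard_empty]
          omega)
      refine ⟨E, hE.trans Set.sdiff_subset, ?_, fun i hi hip hui => (hu ⟨i, hi, hip, hui⟩).elim⟩
      have := (hτ u).1
      omega
  choose early hsub hcard havoid using this
  exact ⟨early, hsub, hcard, fun i hi hip => havoid _ i hi hip rfl⟩

lemma mem_lateSet_of_path {r : V} {early : V → Set V}
    (hchild : ∀ i < p, vs (i + 1) ∈ G.childSet r (vs i))
    (havoid : ∀ i, 0 < i → i < p → vs (i + 1) ∉ early (vs i)) :
    ∀ i, 0 < i → i ≤ p → vs i ∈ lateSet G r early (vs 1) := by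
  intro i hi hip
  induction i with
  | zero => omega
  | succ i ih =>
    rcases Nat.eq_zero_or_pos i with rfl | hi
    · exact Relation.ReflTransGen.refl
    · exact (ih hi (by omega)).tail ⟨hchild i (by omega), havoid i hi (by omega)⟩

end Path

end TSS

theorem stmt6_general {V : Type*} [Fintype V] (G : SimpleGraph V) (hT : G.IsTree)
    (τ : V → ℕ) (hτ : ∀ x : V, 1 ≤ τ x ∧ τ x ≤ (G.neighborSet x).ncard)
    (p : ℕ) (hp : 1 ≤ p) (vs : ℕ → V)
    (hinj : ∀ i ≤ p, ∀ j ≤ p, vs i = vs j → i = j)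
    (hadj : ∀ i < p, G.Adj (vs i) (vs (i + 1)))
    (hns : ∀ i : ℕ, 0 < i → i < p → τ (vs i) < (G.neighborSet (vs i)).ncard) :
    ∃ S : Set V, TSS.IsTargetSet G τ S ∧ vs 0 ∈ S ∧
      ∀ i : ℕ, 1 ≤ i → i ≤ p →
        vs i ∈ (TSS.interval G τ)^[i] S \ (TSS.interval G τ)^[i - 1] S := by
  have hdist := hT.dist_eq_of_adj_of_injOn hinj hadj
  have hchild : ∀ i < p, vs (i + 1) ∈ G.childSet (vs 0) (vs i) := fun i hi =>
    ⟨hadj i hi, by rw [hdist i hi.le, hdist (i + 1) hi]⟩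
  obtain ⟨early, hsub, hcard, havoid⟩ := exists_early_avoiding_path hT (vs 0) hτ hinj hchild hns
  set f := lateSchedule G (vs 0) early (vs 1)
  have hiter : ∀ t, (interval G τ)^[t] {v | f v = 0} = {v | f v ≤ t} :=
    (isSchedule_lateSchedule hT (hadj 0 hp) hsub hcard).iterate_interval_eq
  have hf_path : ∀ i, 0 < i → i ≤ p → f (vs i) = i := fun i hi hip =>
    (lateSchedule_eq_dist (mem_lateSet_of_path hchild havoid i hi hip)).trans (hdist i hip)
  refine ⟨{v | f v = 0}, ⟨Finset.univ.sup f, ?_⟩, ?_, fun i hi hip => ?_⟩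
  · rw [hiter]
    exact Set.eq_univ_of_forall fun v => Finset.le_sup (f := f) (Finset.mem_univ v)
  · exact Nat.le_zero.1 ((lateSchedule_le_dist (vs 0)).trans_eq SimpleGraph.dist_self)
  · rw [hiter, hiter, Set.mem_sdiff, Set.mem_ofPred_eq, Set.mem_ofPred_eq, hf_path i hi hip]
    omega

/-- for a path v₀,…,v_p in a tree with v₀ a leaf and all internal
vertices non-saturated, there is a target set containing v₀ activating each vᵢ
at time exactly i. -/
theorem stmt6 {V : Type*} [Fintype V] (G : SimpleGraph V) (hT : G.IsTree)
    (hcard : 2 ≤ Fintype.card V)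
    (τ : V → ℕ) (hτ : ∀ x : V, 1 ≤ τ x ∧ τ x ≤ (G.neighborSet x).ncard)
    (p : ℕ) (hp : 1 ≤ p) (vs : ℕ → V)
    (hinj : ∀ i ≤ p, ∀ j ≤ p, vs i = vs j → i = j)
    (hadj : ∀ i < p, G.Adj (vs i) (vs (i + 1)))
    (hleaf : (G.neighborSet (vs 0)).ncard = 1)
    (hns : ∀ i : ℕ, 0 < i → i < p → τ (vs i) < (G.neighborSet (vs i)).ncard) :
    ∃ S : Set V, TSS.IsTargetSet G τ S ∧ vs 0 ∈ S ∧
      ∀ i : ℕ, 1 ≤ i → i ≤ p →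
        vs i ∈ (TSS.interval G τ)^[i] S \ (TSS.interval G τ)^[i - 1] S :=
  stmt6_general G hT τ hτ p hp vs hinj hadj hns
end

section
/- Let T be a tree, τ a generalized threshold function, V_f = {u : τ(u) > deg(u)}, and v a saturated vertex (τ(v) = deg(v)) not in H_τ(V_f). If every neighbor of v is saturated or in V_f with the property that v has no non-saturated neighbor outside H_τ(V_f), then the maximum activation time of v over all target sets is 1; in particular, V(T) \ {v} is a target set activating v at time 1. -/
/-!
A vertex whose threshold is at least its degree can only become active after all of its
neighbours are. Two adjacent such vertices outside the initial set therefore wait for each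
other forever. Hence in any target set either `v` or every neighbour of `v` is initially active,
and the saturated vertex `v` is active after one step; `V \ {v}` attains this bound.
-/

namespace TSS

variable {V : Type*}

variable (G : SimpleGraph V) (τ : V → ℕ)

lemma mem_interval_of_neighborSet_subset {v : V} (hv : τ v ≤ (G.neighborSet v).ncard)
    {S : Set V} (hS : G.neighborSet v ⊆ S) : v ∈ interval G τ S :=
  Or.inr <| by rwa [Set.mem_ofPred_eq, Set.inter_eq_left.mpr hS]

lemma neighborSet_subset_of_mem_interval [Finite V] {v : V}
    (hv : (G.neighborSet v).ncard ≤ τ v) {S : Set V} (hmem : v ∈ interval G τ S)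
    (hnot : v ∉ S) : G.neighborSet v ⊆ S := by
  rcases hmem with h | h
  · exact absurd h hnot
  · have hcard : (G.neighborSet v).ncard ≤ (G.neighborSet v ∩ S).ncard := hv.trans h
    rw [← Set.eq_of_subset_of_ncard_le Set.inter_subset_left hcard]
    exact Set.inter_subset_right

lemma notMem_iterate_interval_of_adj [Finite V] {u v : V} (huv : G.Adj u v)
    (hu : (G.neighborSet u).ncard ≤ τ u) (hv : (G.neighborSet v).ncard ≤ τ v)
    {S : Set V} (huS : u ∉ S) (hvS : v ∉ S) :
    ∀ k, u ∉ (interval G τ)^[k] S ∧ v ∉ (interval G τ)^[k] S := by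
  intro k
  induction k with
  | zero => exact ⟨huS, hvS⟩
  | succ k ih =>
    obtain ⟨huk, hvk⟩ := ih
    rw [Function.iterate_succ_apply']
    exact ⟨fun h => hvk (neighborSet_subset_of_mem_interval G τ hu h huk huv),
      fun h => huk (neighborSet_subset_of_mem_interval G τ hv h hvk huv.symm)⟩

lemma vTime_eq_one {S : Set V} {v : V} (h₀ : v ∉ S) (h₁ : v ∈ interval G τ S) :
    vTime G τ S v = 1 := by
  have h₁' : 1 ∈ {k : ℕ | v ∈ (interval G τ)^[k] S} := h₁
  refine le_antisymm (Nat.sInf_le h₁') (Nat.one_le_iff_ne_zero.mpr fun h => ?_)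
  rcases Nat.sInf_eq_zero.mp h with h | h
  · exact h₀ h
  · exact h.subset h₁'

lemma vTime_le_one [Finite V] {v : V} (hsat : τ v = (G.neighborSet v).ncard)
    (hnb : ∀ u ∈ G.neighborSet v, (G.neighborSet u).ncard ≤ τ u)
    {S₀ : Set V} (hS₀ : IsTargetSet G τ S₀) : vTime G τ S₀ v ≤ 1 := by
  obtain ⟨t, ht⟩ := hS₀
  suffices v ∈ interval G τ S₀ from
    Nat.sInf_le (show 1 ∈ {k : ℕ | v ∈ (interval G τ)^[k] S₀} from this)
  by_cases hv : v ∈ S₀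
  · exact Or.inl hv
  refine mem_interval_of_neighborSet_subset G τ hsat.le fun u hu => ?_
  by_contra huS
  exact (notMem_iterate_interval_of_adj G τ hu hsat.ge (hnb u hu) hv huS t).2
    (ht ▸ Set.mem_univ u)

lemma interval_univ_diff_singleton {v : V} (hv : τ v ≤ (G.neighborSet v).ncard) :
    interval G τ (Set.univ \ {v}) = Set.univ := by
  refine Set.eq_univ_of_forall fun w => ?_
  rcases eq_or_ne w v with rfl | hw
  · exact mem_interval_of_neighborSet_subset G τ hv fun u hu =>
      ⟨trivial, (G.ne_of_adj hu).symm⟩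
  · exact Or.inl ⟨trivial, hw⟩

end TSS

open TSS

theorem stmt12_general {V : Type*} [Fintype V] (G : SimpleGraph V)
    (τ : V → ℕ) (v : V)
    (hsat : τ v = (G.neighborSet v).ncard)
    (hnb : ∀ u ∈ G.neighborSet v,
      τ u = (G.neighborSet u).ncard ∨ (G.neighborSet u).ncard < τ u) :
    sSup {k : ℕ | ∃ S₀ : Set V, TSS.IsTargetSet G τ S₀ ∧ TSS.vTime G τ S₀ v = k} = 1 ∧
    TSS.IsTargetSet G τ (Set.univ \ {v}) ∧
    TSS.vTime G τ (Set.univ \ {v}) v = 1 := by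
  have hTS : IsTargetSet G τ (Set.univ \ {v}) :=
    ⟨1, interval_univ_diff_singleton G τ hsat.le⟩
  have hvT : vTime G τ (Set.univ \ {v}) v = 1 :=
    vTime_eq_one G τ (fun h => h.2 rfl)
      (Set.eq_univ_iff_forall.mp (interval_univ_diff_singleton G τ hsat.le) v)
  have hnb_le : ∀ u ∈ G.neighborSet v, (G.neighborSet u).ncard ≤ τ u := fun u hu =>
    (hnb u hu).elim (fun h => h.ge) le_of_lt
  refine ⟨IsGreatest.csSup_eq ⟨⟨_, hTS, hvT⟩, ?_⟩, hTS, hvT⟩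
  rintro k ⟨S₀, hS₀, rfl⟩
  exact vTime_le_one G τ hsat hnb_le hS₀

/-- in a tree, a saturated vertex v outside H(V_f) all of whose
neighbors are saturated or in V_f (in particular, with no non-saturated neighbor
outside H(V_f)) has maximum activation time 1; in particular V(T) \ {v} is a
target set activating v at time 1. -/
theorem stmt12 {V : Type*} [Fintype V] (G : SimpleGraph V) (hT : G.IsTree)
    (τ : V → ℕ) (v : V)
    (hsat : τ v = (G.neighborSet v).ncard)
    (hv : v ∉ TSS.hull G τ {u : V | (G.neighborSet u).ncard < τ u})
    (hnb : ∀ u ∈ G.neighborSet v,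
      τ u = (G.neighborSet u).ncard ∨ (G.neighborSet u).ncard < τ u)
    (hnb' : ∀ u ∈ G.neighborSet v,
      ¬(τ u < (G.neighborSet u).ncard ∧
        u ∉ TSS.hull G τ {u : V | (G.neighborSet u).ncard < τ u})) :
    sSup {k : ℕ | ∃ S₀ : Set V, TSS.IsTargetSet G τ S₀ ∧ TSS.vTime G τ S₀ v = k} = 1 ∧
    TSS.IsTargetSet G τ (Set.univ \ {v}) ∧
    TSS.vTime G τ (Set.univ \ {v}) v = 1 :=
  stmt12_general G τ v hsat hnb
end
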